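/- Let ε ≥ δ > 0. Chaotic Delone sets (aperiodic and almost chaotic) form a residual subset of Del_{ε,δ}; i.e., being chaotic is topologically generic. -/

import Mathlib

open Metric Pointwise

/-- `S` is `δ`-separated. -/
def IsSeparated' {n : ℕ} (δ : ℝ) (S : Set (EuclideanSpace ℝ (Fin n))) : Prop :=
  ∀ x ∈ S, ∀ y ∈ S, x ≠ y → δ ≤ dist x y

/-- `S` is an `(ε,δ)`-Delone subset of ℝⁿ: `ε`-relatively dense and `δ`-separated. -/
def IsDelone {n : ℕ} (ε δ : ℝ) (S : Set (EuclideanSpace ℝ (Fin n))) : Prop :=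
  (∀ x : EuclideanSpace ℝ (Fin n), ∃ y ∈ S, dist x y ≤ ε) ∧ IsSeparated' δ S

/-- The space of `(ε,δ)`-Delone subsets of ℝⁿ. -/
def Del (n : ℕ) (ε δ : ℝ) : Set (Set (EuclideanSpace ℝ (Fin n))) :=
  {S | IsDelone ε δ S}

/-- The basic entourage `N_r` of the local rubber uniformity. -/
def Nrel (n : ℕ) (r : ℝ) (S S' : Set (EuclideanSpace ℝ (Fin n))) : Prop :=
  S ∩ ball (0 : EuclideanSpace ℝ (Fin n)) r ⊆ S' + ball (0 : EuclideanSpace ℝ (Fin n)) (1 / r) ∧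
  S' ∩ ball (0 : EuclideanSpace ℝ (Fin n)) r ⊆ S + ball (0 : EuclideanSpace ℝ (Fin n)) (1 / r)

/-- The translate `S - v` of `S`. -/
def tr {n : ℕ} (v : EuclideanSpace ℝ (Fin n)) (S : Set (EuclideanSpace ℝ (Fin n))) :
    Set (EuclideanSpace ℝ (Fin n)) :=
  (fun x => x - v) '' S

/-- `S` is aperiodic: no nonzero translation fixes it. -/
def IsAperiodicSet {n : ℕ} (S : Set (EuclideanSpace ℝ (Fin n))) : Prop :=
  ∀ v : EuclideanSpace ℝ (Fin n), v ≠ 0 → tr v S ≠ S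

/-- `S` is periodic: its translation symmetry group is a cocompact lattice, i.e. it contains
`n` linearly independent periods. -/
def IsPeriodicSet {n : ℕ} (S : Set (EuclideanSpace ℝ (Fin n))) : Prop :=
  ∃ v : Fin n → EuclideanSpace ℝ (Fin n), LinearIndependent ℝ v ∧ ∀ i, tr (v i) S = S

/-- `S'` belongs to the hull (closure of the translation orbit) of `S`:
every basic rubber neighbourhood of `S'` meets the orbit of `S`. -/
def InHull {n : ℕ} (S S' : Set (EuclideanSpace ℝ (Fin n))) : Prop :=
  ∀ r : ℝ, 0 < r → ∃ v : EuclideanSpace ℝ (Fin n), Nrel n r (tr v S) S'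

/-- `S` is almost chaotic: periodic Delone sets are dense in the hull of `S`. -/
def IsAlmostChaotic {n : ℕ} (ε δ : ℝ) (S : Set (EuclideanSpace ℝ (Fin n))) : Prop :=
  ∀ S' ∈ Del n ε δ, InHull S S' → ∀ r : ℝ, 0 < r →
    ∃ P ∈ Del n ε δ, IsPeriodicSet P ∧ InHull S P ∧ Nrel n r S' P

/-- `F` is an open subset of `Del n ε δ` in the local rubber topology. -/
def IsOpenInDel (n : ℕ) (ε δ : ℝ) (F : Set (Set (EuclideanSpace ℝ (Fin n)))) : Prop :=
  ∀ S ∈ F, ∃ r : ℝ, 0 < r ∧ ∀ S' ∈ Del n ε δ, Nrel n r S S' → S' ∈ F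

/-- `F` is dense in `Del n ε δ` in the local rubber topology. -/
def IsDenseInDel (n : ℕ) (ε δ : ℝ) (F : Set (Set (EuclideanSpace ℝ (Fin n)))) : Prop :=
  ∀ S ∈ Del n ε δ, ∀ r : ℝ, 0 < r → ∃ S' ∈ F, Nrel n r S S'


/-!
The rubber topology on `Del_{ε,δ}` is separable: a Delone set is approximated by finite sets of
points from a countable dense subset of `ℝⁿ`, which yields a dense sequence `D i`. For all `i` and
`m`, the sets having a translate `(m + 1)`-close to `D i` contain an open dense subset; density
holds because, by Zorn's lemma, a patch of any Delone set around the origin can be completed,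
together with a far away patch of `D i`, to a Delone set. A set lying in all of these open dense
sets has a dense orbit. It is almost chaotic because every Delone set is approximated by periodic
ones (repeat a large patch along a coarse cubic lattice, again by Zorn's lemma). It is aperiodic
because a period `v` of `S` is approximately a period of everything in its hull, while some
Delone set contains `0` together with a point that is within `δ` of `v` but different from it.
-/

open Filter Topology

local notation "E" n:max => EuclideanSpace ℝ (Fin n)

section Rubber

variable {n : ℕ} {r a b t : ℝ} {v x : E n} {S S' X Y Z : Set (E n)}

def HalfNrel (n : ℕ) (r : ℝ) (S S' : Set (E n)) : Prop :=
  ∀ x ∈ S, ‖x‖ < r → ∃ y ∈ S', dist x y < 1 / r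

theorem nrel_iff : Nrel n r S S' ↔ HalfNrel n r S S' ∧ HalfNrel n r S' S := by
  simp only [Nrel, HalfNrel, add_ball_zero, Set.subset_def, Set.mem_inter_iff, mem_ball_zero_iff,
    mem_thickening_iff, and_imp]

theorem Nrel.symm (h : Nrel n r S S') : Nrel n r S' S := ⟨h.2, h.1⟩

theorem nrel_of_inter_ball_eq (hr : 0 < r) (h : S ∩ ball 0 r = S' ∩ ball 0 r) :
    Nrel n r S S' := by
  constructor <;> intro x hx
  exacts [Set.subset_add_left _ (mem_ball_self (one_div_pos.2 hr)) (h ▸ hx).1,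
    Set.subset_add_left _ (mem_ball_self (one_div_pos.2 hr)) (h.symm ▸ hx).1]

theorem nrel_refl (hr : 0 < r) (S : Set (E n)) : Nrel n r S S := nrel_of_inter_ball_eq hr rfl

theorem HalfNrel.trans (h₁ : HalfNrel n a X Y) (h₂ : HalfNrel n b Y Z) (ht : 0 < t)
    (ha : 2 * t + 1 ≤ a) (hb : 2 * t + 1 ≤ b) : HalfNrel n t X Z := by
  have h1a : 1 / a ≤ 1 / (2 * t + 1) := one_div_le_one_div_of_le (by positivity) ha
  have h1b : 1 / b ≤ 1 / (2 * t + 1) := one_div_le_one_div_of_le (by positivity) hb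
  have hsum : 1 / (2 * t + 1) + 1 / (2 * t + 1) ≤ 1 / t := by
    rw [← add_div, div_le_div_iff₀ (by positivity) ht]
    linarith
  have hle1 : 1 / (2 * t + 1) ≤ 1 := (div_le_one (by positivity)).2 (by linarith)
  intro x hx hxt
  obtain ⟨y, hy, hxy⟩ := h₁ x hx (by linarith)
  have hyb : ‖y‖ < b := by
    linarith [norm_le_norm_add_norm_sub' y x, norm_sub_rev y x, dist_eq_norm x y]
  obtain ⟨z, hz, hyz⟩ := h₂ y hy hyb
  refine ⟨z, hz, ?_⟩
  linarith [dist_triangle x y z]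

theorem Nrel.trans (h₁ : Nrel n a X Y) (h₂ : Nrel n b Y Z) (ht : 0 < t)
    (ha : 2 * t + 1 ≤ a) (hb : 2 * t + 1 ≤ b) : Nrel n t X Z := by
  rw [nrel_iff] at *
  exact ⟨h₁.1.trans h₂.1 ht ha hb, h₂.2.trans h₁.2 ht hb ha⟩

theorem mem_tr : x ∈ tr v S ↔ x + v ∈ S := by
  constructor
  · rintro ⟨y, hy, rfl⟩
    simpa using hy
  · exact fun h => ⟨x + v, h, add_sub_cancel_right x v⟩

theorem add_mem_of_tr_eq (hv : tr v S = S) (hx : x ∈ S) : x + v ∈ S :=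
  mem_tr.1 (hv.symm ▸ hx)

theorem tr_zero (S : Set (E n)) : tr 0 S = S := by
  simp [tr]

theorem tr_neg_tr (v : E n) (S : Set (E n)) : tr v (tr (-v) S) = S := by
  ext x
  simp [mem_tr]

theorem tr_inter_ball (v : E n) (S : Set (E n)) (r : ℝ) :
    tr v (S ∩ ball v r) = tr v S ∩ ball 0 r := by
  ext x
  simp [mem_tr]

theorem HalfNrel.tr (h : HalfNrel n (b + ‖v‖) S S') (hb : 0 < b) :
    HalfNrel n b (tr v S) (tr v S') := by
  intro x hx hxb
  obtain ⟨y, hy, hxy⟩ := h (x + v) (mem_tr.1 hx) (by linarith [norm_add_le x v])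
  refine ⟨y - v, mem_tr.2 (by simpa using hy), ?_⟩
  rw [show dist x (y - v) = dist (x + v) y by rw [← dist_add_right x (y - v) v, sub_add_cancel]]
  exact hxy.trans_le (one_div_le_one_div_of_le hb (by linarith [norm_nonneg v]))

theorem Nrel.tr (h : Nrel n (b + ‖v‖) S S') (hb : 0 < b) : Nrel n b (tr v S) (tr v S') := by
  rw [nrel_iff] at *
  exact ⟨h.1.tr hb, h.2.tr hb⟩

end Rubber

section Separated

variable {n : ℕ} {ε δ : ℝ} {S : Set (E n)}

theorem IsSeparated'.mono {T : Set (E n)} (hS : IsSeparated' δ S) (hT : T ⊆ S) :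
    IsSeparated' δ T :=
  fun x hx y hy => hS x (hT hx) y (hT hy)

theorem IsSeparated'.tr (hS : IsSeparated' δ S) (v : E n) : IsSeparated' δ (tr v S) := by
  rintro _ ⟨x, hx, rfl⟩ _ ⟨y, hy, rfl⟩ hxy
  rw [dist_sub_right]
  exact hS x hx y hy (by rintro rfl; exact hxy rfl)

theorem IsSeparated'.finite_of_isBounded (hδ : 0 < δ) (hS : IsSeparated' δ S)
    (hb : Bornology.IsBounded S) : S.Finite :=
  (isCompact_of_isClosed_isBounded (isClosed_of_pairwise_le_dist hδ hS) hb).finite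
    ⟨DiscreteTopology.of_forall_le_dist hδ fun x y hxy =>
      hS x x.2 y y.2 (Subtype.coe_ne_coe.2 hxy)⟩

theorem tr_mem_Del (hS : S ∈ Del n ε δ) (v : E n) : tr v S ∈ Del n ε δ := by
  refine ⟨fun x => ?_, hS.2.tr v⟩
  obtain ⟨y, hy, hxy⟩ := hS.1 (x + v)
  exact ⟨y - v, ⟨y, hy, rfl⟩, by rwa [← dist_add_right x (y - v) v, sub_add_cancel]⟩

theorem exists_invariant_delone_extension (hε : 0 ≤ ε) (hεδ : δ ≤ ε)
    (Λ : AddSubgroup (E n)) (hΛ : ∀ l ∈ Λ, l ≠ 0 → δ ≤ ‖l‖) {K W : Set (E n)}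
    (hK : IsSeparated' δ K)
    (hKΛ : ∀ l ∈ Λ, ∀ x ∈ K, x + l ∈ K) (hWΛ : ∀ l ∈ Λ, ∀ x ∈ W, x + l ∈ W)
    (hcover : ∀ x ∉ W, ∃ y ∈ K, dist x y ≤ ε) :
    ∃ T ∈ Del n ε δ, K ⊆ T ∧ T ⊆ K ∪ W ∧ ∀ l ∈ Λ, tr l T = T := by
  let 𝒮 : Set (Set (E n)) :=
    {T | K ⊆ T ∧ T ⊆ K ∪ W ∧ IsSeparated' δ T ∧ ∀ l ∈ Λ, ∀ x ∈ T, x + l ∈ T}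
  obtain ⟨T, -, hmax⟩ := zorn_subset_nonempty 𝒮 (fun c hc hchain ⟨s, hs⟩ => ⟨⋃₀ c,
    ⟨(hc hs).1.trans (Set.subset_sUnion_of_mem hs), Set.sUnion_subset fun s hs => (hc hs).2.1,
      (Set.pairwise_sUnion hchain.directedOn).2 fun s hs => (hc hs).2.2.1,
      fun l hl x ⟨s, hs, hx⟩ => ⟨s, hs, (hc hs).2.2.2 l hl x hx⟩⟩,
    fun _ => Set.subset_sUnion_of_mem⟩) K ⟨subset_rfl, Set.subset_union_left, hK, hKΛ⟩
  obtain ⟨⟨hKT, hTKW, hTsep, hTΛ⟩, hTmax⟩ := hmax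
  -- by maximality: adding the `Λ`-orbit of such a point to `T` stays inside `𝒮`
  have hfill : ∀ x ∈ W, (∀ y ∈ T, y ≠ x → δ ≤ dist x y) → x ∈ T := by
    intro x hxW hfar
    have horbit : IsSeparated' δ ((x + ·) '' Λ) := by
      rintro _ ⟨l, hl, rfl⟩ _ ⟨l', hl', rfl⟩ hne
      rw [dist_add_left, dist_eq_norm]
      exact hΛ _ (sub_mem hl hl') (sub_ne_zero.2 fun h => hne (h ▸ rfl))
    have hcross : ∀ y ∈ T, ∀ l ∈ Λ, y ≠ x + l → δ ≤ dist (x + l) y := by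
      intro y hy l hl hne
      rw [← dist_add_right (x + l) y (-l), add_neg_cancel_right]
      exact hfar _ (hTΛ _ (neg_mem hl) y hy) (by rintro rfl; simp at hne)
    have hmem : T ∪ (x + ·) '' Λ ∈ 𝒮 := by
      refine ⟨hKT.trans Set.subset_union_left,
        Set.union_subset hTKW (by rintro _ ⟨l, hl, rfl⟩; exact Or.inr (hWΛ l hl x hxW)),
        Set.pairwise_union.2 ⟨hTsep, horbit, ?_⟩, ?_⟩
      · rintro y hy _ ⟨l, hl, rfl⟩ hne
        exact ⟨dist_comm (x + l) y ▸ hcross y hy l hl hne, hcross y hy l hl hne⟩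
      · rintro l hl y (hy | ⟨l', hl', rfl⟩)
        · exact Or.inl (hTΛ l hl y hy)
        · exact Or.inr ⟨l' + l, add_mem hl' hl, (add_assoc x l' l).symm⟩
    exact hTmax hmem Set.subset_union_left (Or.inr ⟨0, zero_mem Λ, add_zero x⟩)
  refine ⟨T, ⟨fun x => ?_, hTsep⟩, hKT, hTKW, fun l hl => Set.ext fun x => ?_⟩
  · by_cases hxW : x ∈ W
    · by_contra! hfar
      have hxT := hfill x hxW fun y hy _ => hεδ.trans (hfar y hy).le
      simpa using (hfar x hxT).trans_le' hε
    · obtain ⟨y, hy, hxy⟩ := hcover x hxW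
      exact ⟨y, hKT hy, hxy⟩
  · rw [mem_tr]
    exact ⟨fun h => by simpa using hTΛ _ (neg_mem hl) _ h, hTΛ l hl x⟩

theorem exists_delone_superset (hε : 0 ≤ ε) (hεδ : δ ≤ ε) {K : Set (E n)}
    (hK : IsSeparated' δ K) : ∃ T ∈ Del n ε δ, K ⊆ T := by
  obtain ⟨T, hT, hKT, -⟩ := exists_invariant_delone_extension hε hεδ ⊥
    (fun l hl hl0 => absurd hl hl0) hK (fun l hl x hx => by simpa [AddSubgroup.mem_bot.1 hl])
    (fun _ _ x _ => Set.mem_univ _) (fun x hx => absurd (Set.mem_univ x) hx)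
  exact ⟨T, hT, hKT⟩

end Separated

section Patching

variable {n : ℕ} {ε δ : ℝ}

theorem le_dist_of_mem_closedBall {α : Type*} [PseudoMetricSpace α] {x y p q : α} {R R' : ℝ}
    (hx : x ∈ closedBall p R) (hy : y ∈ closedBall q R') (hpq : R + R' + δ ≤ dist p q) :
    δ ≤ dist x y := by
  rw [mem_closedBall] at hx hy
  linarith [dist_triangle4 p x y q, dist_comm p x]

theorem exists_mem_inter_closedBall_dist_le {α : Type*} [PseudoMetricSpace α] {S : Set α}
    (hS : ∀ x, ∃ y ∈ S, dist x y ≤ ε) {x p : α} {s : ℝ} (hx : dist x p < s) :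
    ∃ y ∈ S ∩ closedBall p (s + ε), dist x y ≤ ε := by
  obtain ⟨y, hy, hxy⟩ := hS x
  refine ⟨y, ⟨hy, ?_⟩, hxy⟩
  rw [mem_closedBall]
  linarith [dist_triangle y x p, dist_comm x y]

theorem exists_invariant_delone_patching (hδ : 0 < δ) (hεδ : δ ≤ ε) (Λ : AddSubgroup (E n))
    (hΛ : ∀ l ∈ Λ, l ≠ 0 → δ ≤ ‖l‖) {ι : Type*} {S : ι → Set (E n)}
    (hS : ∀ i, S i ∈ Del n ε δ) {p : ι → E n} {r : ι → ℝ}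
    (hsep : Pairwise fun i j => r i + r j + 4 * ε + 3 * δ ≤ dist (p i) (p j))
    (hΛι : ∀ l ∈ Λ, ∀ i, ∃ j, p j = p i + l ∧ r j = r i ∧ S j = tr (-l) (S i)) :
    ∃ T ∈ Del n ε δ, (∀ l ∈ Λ, tr l T = T) ∧
      ∀ i, T ∩ ball (p i) (r i) = S i ∩ ball (p i) (r i) := by
  -- `S i` is kept on the ball of radius `r i + 2ε + δ`, so that it `ε`-covers the ball of radius
  -- `r i + ε + δ` outside of which new points may be added; by `hsep` these patches are `δ` apart.
  set K := ⋃ i, S i ∩ closedBall (p i) (r i + ε + δ + ε)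
  set W := {x | ∀ i, r i + ε + δ ≤ dist x (p i)}
  have hK : IsSeparated' δ K := by
    intro x hx y hy hxy
    obtain ⟨i, hxS, hxB⟩ := Set.mem_iUnion.1 hx
    obtain ⟨j, hyS, hyB⟩ := Set.mem_iUnion.1 hy
    rcases eq_or_ne i j with rfl | hij
    · exact (hS i).2 x hxS y hyS hxy
    · exact le_dist_of_mem_closedBall hxB hyB (by linarith [hsep hij])
  have hKΛ : ∀ l ∈ Λ, ∀ x ∈ K, x + l ∈ K := by
    intro l hl x hx
    obtain ⟨i, hxS, hxB⟩ := Set.mem_iUnion.1 hx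
    obtain ⟨j, hpj, hrj, hSj⟩ := hΛι l hl i
    refine Set.mem_iUnion.2 ⟨j, ?_, ?_⟩
    · rw [hSj, mem_tr, add_neg_cancel_right]
      exact hxS
    · rwa [hpj, hrj, mem_closedBall, dist_add_right]
  have hWΛ : ∀ l ∈ Λ, ∀ x ∈ W, x + l ∈ W := by
    intro l hl x hx i
    obtain ⟨j, hpj, hrj, -⟩ := hΛι (-l) (neg_mem hl) i
    have := hx j
    rwa [hpj, hrj, ← dist_add_right x _ l, neg_add_cancel_right] at this
  have hcover : ∀ x ∉ W, ∃ y ∈ K, dist x y ≤ ε := by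
    intro x hx
    obtain ⟨i, hi⟩ : ∃ i, dist x (p i) < r i + ε + δ := by simpa [W] using hx
    obtain ⟨y, hy, hxy⟩ := exists_mem_inter_closedBall_dist_le (hS i).1 hi
    exact ⟨y, Set.mem_iUnion.2 ⟨i, hy⟩, hxy⟩
  obtain ⟨T, hT, hKT, hTKW, hTΛ⟩ :=
    exists_invariant_delone_extension (hδ.le.trans hεδ) hεδ Λ hΛ hK hKΛ hWΛ hcover
  refine ⟨T, hT, hTΛ, fun i => Set.Subset.antisymm ?_ ?_⟩
  · rintro x ⟨hxT, hxB⟩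
    rw [mem_ball] at hxB
    refine ⟨?_, hxB⟩
    rcases hTKW hxT with hxK | hxW
    · obtain ⟨j, hxS, hxBj⟩ := Set.mem_iUnion.1 hxK
      rcases eq_or_ne i j with rfl | hij
      · exact hxS
      · rw [mem_closedBall] at hxBj
        linarith [hsep hij, dist_triangle_left (p i) (p j) x]
    · linarith [hxW i]
  · rintro x ⟨hxS, hxB⟩
    refine ⟨hKT (Set.mem_iUnion.2 ⟨i, hxS, ?_⟩), hxB⟩
    exact closedBall_subset_closedBall (by linarith) (ball_subset_closedBall hxB)

theorem exists_delone_nrel_and_tr_nrel (hδ : 0 < δ) (hεδ : δ ≤ ε) {S P : Set (E n)}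
    (hS : S ∈ Del n ε δ) (hP : P ∈ Del n ε δ) {r ρ : ℝ} (hr : 0 < r) (hρ : 0 < ρ) :
    ∃ T ∈ Del n ε δ, Nrel n r S T ∧ ∃ v, Nrel n ρ (tr v T) P := by
  rcases subsingleton_or_nontrivial (E n) with hE | hE
  · obtain ⟨s, hs, -⟩ := hS.1 0
    obtain ⟨q, hq, -⟩ := hP.1 0
    have hSP : S = P := Set.ext fun x =>
      ⟨fun _ => Subsingleton.elim q x ▸ hq, fun _ => Subsingleton.elim s x ▸ hs⟩
    exact ⟨S, hS, nrel_refl hr S, 0, by rw [tr_zero, hSP]; exact nrel_refl hρ P⟩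
  have hε : 0 < ε := hδ.trans_le hεδ
  obtain ⟨v, hv⟩ := exists_norm_eq (E n) (c := r + ρ + 4 * ε + 3 * δ) (by positivity)
  obtain ⟨T, hT, -, hagree⟩ := exists_invariant_delone_patching hδ hεδ ⊥ (by simp)
    (S := ![S, tr (-v) P]) (p := ![0, v]) (r := ![r, ρ])
    (Fin.forall_fin_two.2 ⟨hS, tr_mem_Del hP _⟩)
    (by intro i j hij; fin_cases i <;> fin_cases j <;> simp_all [dist_comm, add_comm])
    (fun l hl i => ⟨i, by simp [AddSubgroup.mem_bot.1 hl, tr_zero]⟩)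
  refine ⟨T, hT, (nrel_of_inter_ball_eq hr (hagree 0)).symm, v, nrel_of_inter_ball_eq hρ ?_⟩
  rw [← tr_inter_ball]
  simpa [tr_neg_tr, tr_inter_ball] using congrArg (tr v) (hagree 1)

end Patching

section Periodic

variable {n : ℕ} {c ε δ : ℝ}

def cubicLattice (n : ℕ) (c : ℝ) : AddSubgroup (E n) :=
  (AddSubgroup.pi Set.univ fun _ => AddSubgroup.zmultiples c).comap
    (WithLp.linearEquiv 2 ℝ (Fin n → ℝ)).toLinearMap.toAddMonoidHom

theorem mem_cubicLattice {l : E n} :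
    l ∈ cubicLattice n c ↔ ∀ j, l j ∈ AddSubgroup.zmultiples c := by
  simp [cubicLattice, AddSubgroup.mem_pi]

theorem le_norm_of_mem_cubicLattice (hc : 0 ≤ c) {l : E n} (hl : l ∈ cubicLattice n c)
    (hl0 : l ≠ 0) : c ≤ ‖l‖ := by
  obtain ⟨j, hj⟩ : ∃ j, l j ≠ 0 := by
    by_contra! h
    exact hl0 (by ext j; exact h j)
  obtain ⟨k, hk⟩ := AddSubgroup.mem_zmultiples_iff.1 (mem_cubicLattice.1 hl j)
  have hk0 : k ≠ 0 := by rintro rfl; simp at hk; exact hj hk.symm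
  calc c ≤ |(k : ℝ)| * c := le_mul_of_one_le_left hc (by exact_mod_cast Int.one_le_abs hk0)
    _ = ‖l j‖ := by rw [← hk, zsmul_eq_mul, Real.norm_eq_abs, abs_mul, abs_of_nonneg hc]
    _ ≤ ‖l‖ := PiLp.norm_apply_le l j

theorem isPeriodicSet_of_forall_cubicLattice (hc : c ≠ 0) {P : Set (E n)}
    (hP : ∀ l ∈ cubicLattice n c, tr l P = P) : IsPeriodicSet P := by
  refine ⟨fun i => c • EuclideanSpace.single i 1, ?_, fun i => hP _ ?_⟩
  · let b := (EuclideanSpace.basisFun (Fin n) ℝ).toBasis.isUnitSMul fun _ => hc.isUnit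
    have hb : ⇑b = fun i => c • EuclideanSpace.single i 1 :=
      funext fun i => by simp [b, Module.Basis.isUnitSMul_apply]
    exact hb ▸ b.linearIndependent
  · refine mem_cubicLattice.2 fun j => ?_
    by_cases hij : j = i
    · simp [hij, AddSubgroup.mem_zmultiples]
    · simp [hij]

theorem exists_periodic_delone_nrel (hδ : 0 < δ) (hεδ : δ ≤ ε) {S : Set (E n)}
    (hS : S ∈ Del n ε δ) {r : ℝ} (hr : 0 < r) :
    ∃ P ∈ Del n ε δ, IsPeriodicSet P ∧ Nrel n r S P := by
  set c := r + r + 4 * ε + 3 * δ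
  have hc : δ ≤ c := by linarith
  let Λ := cubicLattice n c
  obtain ⟨P, hP, hPΛ, hagree⟩ := exists_invariant_delone_patching hδ hεδ Λ
    (fun l hl hl0 => hc.trans (le_norm_of_mem_cubicLattice (hδ.le.trans hc) hl hl0))
    (S := fun l : Λ => tr (-l) S) (p := (↑)) (r := fun _ => r) (fun l => tr_mem_Del hS _)
    (fun i j hij => by
      change c ≤ dist (i : E n) j
      rw [dist_eq_norm]
      exact le_norm_of_mem_cubicLattice (hδ.le.trans hc) (sub_mem i.2 j.2)
        (sub_ne_zero.2 (Subtype.coe_ne_coe.2 hij)))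
    (fun l hl i => ⟨⟨i + l, add_mem i.2 hl⟩, rfl, rfl, by
      ext x
      simp only [mem_tr, neg_add_rev, add_assoc]⟩)
  refine ⟨P, hP, isPeriodicSet_of_forall_cubicLattice (by linarith) hPΛ,
    nrel_of_inter_ball_eq hr ?_⟩
  simpa [tr_zero] using (hagree 0).symm

end Periodic

section Genericity

variable {n : ℕ} {ε δ : ℝ}

theorem exists_finite_subset_nrel {Q : Set (E n)} (hQ : Dense Q) (hδ : 0 < δ) {S : Set (E n)}
    (hS : IsSeparated' δ S) {r : ℝ} (hr : 0 < r) : ∃ A ⊆ Q, A.Finite ∧ Nrel n r S A := by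
  have hfin : (S ∩ ball 0 r).Finite :=
    (hS.mono Set.inter_subset_left).finite_of_isBounded hδ (isBounded_ball.subset
      Set.inter_subset_right)
  choose q hqQ hq using fun x => hQ.exists_dist_lt x (one_div_pos.2 hr)
  refine ⟨q '' (S ∩ ball 0 r), Set.image_subset_iff.2 fun x _ => hqQ x, hfin.image q,
    nrel_iff.2 ⟨fun x hx hxr => ?_, ?_⟩⟩
  · exact ⟨q x, ⟨x, ⟨hx, mem_ball_zero_iff.2 hxr⟩, rfl⟩, hq x⟩
  · rintro _ ⟨x, hx, rfl⟩ -
    exact ⟨x, hx.1, dist_comm x (q x) ▸ hq x⟩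

theorem exists_seq_dense_Del (hδ : 0 < δ) (hεδ : δ ≤ ε) :
    ∃ D : ℕ → Set (E n), (∀ i, D i ∈ Del n ε δ) ∧
      ∀ S ∈ Del n ε δ, ∀ r, 0 < r → ∃ i, Nrel n r (D i) S := by
  obtain ⟨Q, hQc, hQ⟩ := TopologicalSpace.exists_countable_dense (E n)
  let 𝒜 : Set (Set (E n) × ℕ) :=
    {A | (A.1.Finite ∧ A.1 ⊆ Q) ∧ ∃ D ∈ Del n ε δ, Nrel n (A.2 + 1) D A.1}
  have h𝒜 : 𝒜.Countable :=
    ((Set.countable_ofPred_finite_subset hQc).prod Set.countable_univ).mono fun _ hA =>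
      Set.mem_prod.2 ⟨hA.1, Set.mem_univ _⟩
  have := h𝒜.to_subtype
  choose D₀ hD₀ using fun A : 𝒜 => A.2.2
  have hdense : ∀ S ∈ Del n ε δ, ∀ r, 0 < r → ∃ A, Nrel n r (D₀ A) S := by
    intro S hS r hr
    obtain ⟨k, hk⟩ := exists_nat_ge (2 * r)
    obtain ⟨A, hAQ, hA, hSA⟩ := exists_finite_subset_nrel hQ hδ hS.2 (Nat.cast_add_one_pos k)
    exact ⟨⟨(A, k), ⟨hA, hAQ⟩, S, hS, hSA⟩, (hD₀ _).2.trans hSA.symm hr (by linarith)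
      (by linarith)⟩
  obtain ⟨S, hS, -⟩ := exists_delone_superset (hδ.le.trans hεδ) hεδ (Set.pairwise_empty _)
  obtain ⟨A, -⟩ := hdense S hS 1 one_pos
  obtain ⟨D, hD⟩ := (Set.countable_range D₀).exists_eq_range ⟨D₀ A, A, rfl⟩
  refine ⟨D, fun i => ?_, fun S hS r hr => ?_⟩
  · obtain ⟨A, hA⟩ := hD ▸ Set.mem_range_self i
    exact hA ▸ (hD₀ A).1
  · obtain ⟨A, hA⟩ := hdense S hS r hr
    obtain ⟨i, hi⟩ := hD ▸ Set.mem_range_self A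
    exact ⟨i, hi ▸ hA⟩

def delInterior (n : ℕ) (ε δ : ℝ) (V : Set (Set (E n))) : Set (Set (E n)) :=
  {S ∈ Del n ε δ | ∃ r, 0 < r ∧ ∀ S' ∈ Del n ε δ, Nrel n r S S' → S' ∈ V}

def OrbitNear (n : ℕ) (r : ℝ) (D : Set (E n)) : Set (Set (E n)) :=
  {S | ∃ v, Nrel n r (tr v S) D}

theorem delInterior_subset {V : Set (Set (E n))} : delInterior n ε δ V ⊆ V :=
  fun S ⟨hS, _, hr, hV⟩ => hV S hS (nrel_refl hr S)

theorem isOpenInDel_delInterior (V : Set (Set (E n))) :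
    IsOpenInDel n ε δ (delInterior n ε δ V) :=
  fun S ⟨_, r, hr, hV⟩ => ⟨2 * r + 1, by positivity, fun S' hS' hSS' =>
    ⟨hS', 2 * r + 1, by positivity, fun S'' hS'' hS'S'' =>
      hV S'' hS'' (hSS'.trans hS'S'' hr le_rfl le_rfl)⟩⟩

theorem isDenseInDel_delInterior_orbitNear (hδ : 0 < δ) (hεδ : δ ≤ ε) {D : Set (E n)}
    (hD : D ∈ Del n ε δ) {r : ℝ} (hr : 0 < r) :
    IsDenseInDel n ε δ (delInterior n ε δ (OrbitNear n r D)) := by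
  intro S hS t ht
  obtain ⟨T, hT, hST, v, hTD⟩ :=
    exists_delone_nrel_and_tr_nrel hδ hεδ hS hD ht (by positivity : 0 < 2 * r + 1)
  refine ⟨T, ⟨hT, 2 * r + 1 + ‖v‖, by positivity, fun T' _ hTT' => ⟨v, ?_⟩⟩, hST⟩
  exact (hTT'.tr (by positivity)).symm.trans hTD hr le_rfl le_rfl

theorem inHull_of_forall_mem_orbitNear {D : ℕ → Set (E n)}
    (hD : ∀ S ∈ Del n ε δ, ∀ r, 0 < r → ∃ i, Nrel n r (D i) S) {S : Set (E n)}
    (hS : ∀ i m : ℕ, S ∈ OrbitNear n (m + 1) (D i)) {S' : Set (E n)}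
    (hS' : S' ∈ Del n ε δ) : InHull S S' := by
  intro t ht
  obtain ⟨i, hi⟩ := hD S' hS' (2 * t + 1) (by positivity)
  obtain ⟨m, hm⟩ := exists_nat_ge (2 * t)
  obtain ⟨v, hv⟩ := hS i m
  exact ⟨v, hv.trans hi ht (by linarith) le_rfl⟩

theorem eq_or_le_dist_of_inHull {S T : Set (E n)} (hS : IsSeparated' δ S)
    {v : E n} (hv : tr v S = S) (hT : InHull S T) {p q : E n} (hp : p ∈ T) (hq : q ∈ T) :
    p + v = q ∨ δ ≤ dist (p + v) q := by
  by_contra! h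
  obtain ⟨hne, hlt⟩ := h
  have hd := dist_pos.2 hne
  obtain ⟨ρ, hρ, hpρ, hqρ, hρd, hρδ⟩ : ∃ ρ, 0 < ρ ∧ ‖p‖ < ρ ∧ ‖q‖ < ρ ∧
      2 / ρ < dist (p + v) q ∧ 2 / ρ < δ - dist (p + v) q := by
    have h2 : Tendsto (fun ρ : ℝ => 2 / ρ) atTop (𝓝 0) :=
      tendsto_const_nhds.div_atTop tendsto_id
    exact ((eventually_gt_atTop 0).and <| (eventually_gt_atTop _).and <|
      (eventually_gt_atTop _).and <| (h2.eventually (gt_mem_nhds hd)).and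
      (h2.eventually (gt_mem_nhds (sub_pos.2 hlt)))).exists
  obtain ⟨u, hu⟩ := hT ρ hρ
  have hTS := (nrel_iff.1 hu).2
  obtain ⟨a, ha, hpa⟩ := hTS p hp hpρ
  obtain ⟨b, hb, hqb⟩ := hTS q hq hqρ
  have hav : a + v ∈ tr u S := mem_tr.2 (by
    rw [add_right_comm]
    exact add_mem_of_tr_eq hv (mem_tr.1 ha))
  have hupper := dist_triangle4 (a + v) (p + v) q b
  have hlower := dist_triangle4 (p + v) (a + v) b q
  rw [dist_add_right, dist_comm a p] at hupper
  rw [dist_add_right, dist_comm b q] at hlower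
  have h2ρ : 1 / ρ + 1 / ρ = 2 / ρ := by ring
  rcases eq_or_ne (a + v) b with hab | hab
  · rw [hab, dist_self] at hlower
    linarith
  · linarith [(hS.tr u) _ hav _ hb hab]

theorem exists_pair_separated_near (hδ : 0 < δ) {v : E n} (hv : v ≠ 0) :
    ∃ q, IsSeparated' δ {0, q} ∧ v ≠ q ∧ dist v q < δ := by
  have hv' := norm_pos_iff.2 hv
  by_cases hvδ : ‖v‖ < δ
  · exact ⟨0, fun x hx y hy hxy => by simp_all, hv, by rwa [dist_zero_right]⟩
  set q := (1 + δ / (2 * ‖v‖)) • v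
  have hvq : dist v q = δ / 2 := by
    rw [dist_eq_norm, show v - q = -(δ / (2 * ‖v‖)) • v by simp only [q]; module, norm_smul,
      norm_neg, Real.norm_of_nonneg (by positivity)]
    field_simp
  have hq : ‖q‖ = ‖v‖ + δ / 2 := by
    rw [norm_smul, Real.norm_of_nonneg (by positivity)]
    field_simp
  refine ⟨q, Set.pairwise_pair.2 fun _ => ⟨?_, ?_⟩, dist_pos.1 (by linarith), by linarith⟩
  · rw [dist_zero_left]
    linarith
  · rw [dist_zero_right]
    linarith

theorem isAperiodicSet_of_forall_inHull (hδ : 0 < δ) (hεδ : δ ≤ ε) {S : Set (E n)}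
    (hS : S ∈ Del n ε δ) (hhull : ∀ T ∈ Del n ε δ, InHull S T) : IsAperiodicSet S := by
  intro v hv hper
  obtain ⟨q, hq, hvq, hvqδ⟩ := exists_pair_separated_near hδ hv
  obtain ⟨T, hT, h0qT⟩ := exists_delone_superset (hδ.le.trans hεδ) hεδ hq
  rcases eq_or_le_dist_of_inHull hS.2 hper (hhull T hT) (h0qT (Set.mem_insert 0 _))
    (h0qT (Set.mem_insert_of_mem 0 rfl)) with h | h
  · exact hvq (by simpa using h)
  · exact (by simpa using h : ¬ dist v q < δ) hvqδ

theorem isAlmostChaotic_of_forall_inHull (hδ : 0 < δ) (hεδ : δ ≤ ε) {S : Set (E n)}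
    (hhull : ∀ T ∈ Del n ε δ, InHull S T) : IsAlmostChaotic ε δ S := by
  intro S' hS' _ r hr
  obtain ⟨P, hP, hPper, hS'P⟩ := exists_periodic_delone_nrel hδ hεδ hS' hr
  exact ⟨P, hP, hPper, hhull P hP, hS'P⟩

end Genericity

/-- Being chaotic (aperiodic and almost chaotic) is generic in `Del_{ε,δ}` for `ε ≥ δ > 0`. -/
theorem chaotic_generic (n : ℕ) (ε δ : ℝ) (hδ : 0 < δ) (hεδ : δ ≤ ε) :
    ∃ F : ℕ → Set (Set (EuclideanSpace ℝ (Fin n))),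
      (∀ k, F k ⊆ Del n ε δ ∧ IsOpenInDel n ε δ (F k) ∧ IsDenseInDel n ε δ (F k)) ∧
      ∀ S, (∀ k, S ∈ F k) →
        S ∈ Del n ε δ ∧ IsAlmostChaotic ε δ S ∧ IsAperiodicSet S := by
  obtain ⟨D, hD, hdense⟩ := exists_seq_dense_Del (n := n) hδ hεδ
  let F (k : ℕ) := delInterior n ε δ (OrbitNear n (k.unpair.2 + 1) (D k.unpair.1))
  refine ⟨F, fun k => ⟨fun _ hS => hS.1, isOpenInDel_delInterior _,
      isDenseInDel_delInterior_orbitNear hδ hεδ (hD _) (Nat.cast_add_one_pos _)⟩,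
    fun S hS => ?_⟩
  have hSD : S ∈ Del n ε δ := (hS 0).1
  have hhull : ∀ T ∈ Del n ε δ, InHull S T := fun T hT =>
    inHull_of_forall_mem_orbitNear hdense
      (fun i m => by simpa [F] using delInterior_subset (hS (Nat.pair i m))) hT
  exact ⟨hSD, isAlmostChaotic_of_forall_inHull hδ hεδ hhull,
    isAperiodicSet_of_forall_inHull hδ hεδ hSD hhull⟩
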